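/- There exists a computably enumerable equivalence relation on ℕ which is not the connectedness relation of any computable graph. Concretely, for a c.e. non-computable set A ⊆ ℕ, the relation a E b ⟺ (a = b) ∨ (∃n, {a,b} = {2n, 2n+1} ∧ n ∈ A) is a ceer that is not computably graphable. -/

import Mathlib

/-!
The relation `pairRel A` identifies `2n` with `2n + 1` exactly when `n ∈ A`, so it is c.e. as
soon as `A` is. Its classes have at most two elements, and a path from `x` to `y` in a graph
whose component of `x` lies in `{x, y}` is a single edge. Hence a graph generating `pairRel A`
has `2n — 2n+1` as an edge iff `n ∈ A`, and a computable such graph would decide `A`.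
-/

def CEPred (S : ℕ → Prop) : Prop :=
  ∃ p : ℕ →. Unit, Partrec p ∧ ∀ n, (p n).Dom ↔ S n

theorem cePred_iff_rePred {S : ℕ → Prop} : CEPred S ↔ REPred S := by
  constructor
  · rintro ⟨p, hp, hdom⟩
    exact hp.dom_re.of_eq hdom
  · intro hS
    exact ⟨_, hS, fun n => ⟨fun ⟨h, _⟩ => h, fun h => ⟨h, trivial⟩⟩⟩

section REPred

variable {α β : Type*} [Primcodable α] [Primcodable β] {p q : α → Prop}

theorem REPred.comp {p : β → Prop} (hp : REPred p) {f : α → β} (hf : Computable f) :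
    REPred fun a => p (f a) :=
  Partrec.comp hp hf

theorem REPred.and (hp : REPred p) (hq : REPred q) : REPred fun a => p a ∧ q a :=
  (Partrec.bind hp (hq.comp Computable.fst).to₂).of_eq fun a => by
    by_cases hpa : p a <;> by_cases hqa : q a <;> simp [hpa, hqa, Part.assert_pos, Part.assert_neg]

theorem REPred.or_of_computablePred (hp : ComputablePred p) (hq : REPred q) :
    REPred fun a => p a ∨ q a := by
  classical
  refine (Partrec.cond hp.decide (Partrec.const' (Part.some ())) hq).of_eq fun a => ?_
  by_cases hpa : p a <;> by_cases hqa : q a <;> simp [hpa, hqa, Part.assert_pos, Part.assert_neg]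

theorem ComputablePred.comp {p : β → Prop} (hp : ComputablePred p) {f : α → β}
    (hf : Computable f) : ComputablePred fun a => p (f a) :=
  let ⟨_, h⟩ := hp
  ⟨inferInstance, h.comp hf⟩

end REPred

theorem Relation.ReflTransGen.eq_or_of_forall_eq_or_eq {α : Type*} {r : α → α → Prop} {x y : α}
    (h : Relation.ReflTransGen r x y)
    (hclass : ∀ z, Relation.ReflTransGen r x z → z = x ∨ z = y) : x = y ∨ r x y := by
  have reach : ∀ c, Relation.ReflTransGen r x c → x = c ∨ r x c := by
    intro c hc
    induction hc with
    | refl => exact Or.inl rfl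
    | @tail b c hxb hbc ih =>
      rcases ih with rfl | hxb'
      · exact Or.inr hbc
      rcases hclass c (hxb.tail hbc) with rfl | rfl
      · exact Or.inl rfl
      rcases hclass b hxb with rfl | rfl
      · exact Or.inr hbc
      · exact Or.inr hxb'
  exact reach y h

def pairRel (A : ℕ → Prop) (a b : ℕ) : Prop :=
  a = b ∨ ∃ n : ℕ, A n ∧ ((a = 2 * n ∧ b = 2 * n + 1) ∨ (a = 2 * n + 1 ∧ b = 2 * n))

namespace pairRel

variable {A : ℕ → Prop}

theorem iff_eq_or_div_two {a b : ℕ} : pairRel A a b ↔ a = b ∨ (a / 2 = b / 2 ∧ A (a / 2)) := by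
  constructor
  · rintro (rfl | ⟨n, hn, hab⟩)
    · exact Or.inl rfl
    · obtain rfl : a / 2 = n := by omega
      exact Or.inr ⟨by omega, hn⟩
  · rintro (rfl | ⟨hab, hA⟩)
    · exact Or.inl rfl
    · rcases eq_or_ne a b with rfl | hne
      · exact Or.inl rfl
      · exact Or.inr ⟨a / 2, hA, by omega⟩

theorem equivalence (A : ℕ → Prop) : Equivalence (pairRel A) where
  refl _ := Or.inl rfl
  symm {a b} h := by
    rcases iff_eq_or_div_two.1 h with rfl | ⟨hab, hA⟩
    · exact Or.inl rfl
    · exact iff_eq_or_div_two.2 (Or.inr ⟨hab.symm, hab ▸ hA⟩)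
  trans {a b c} h₁ h₂ := by
    rcases iff_eq_or_div_two.1 h₁ with rfl | ⟨hab, hA⟩
    · exact h₂
    rcases iff_eq_or_div_two.1 h₂ with rfl | ⟨hbc, -⟩
    · exact h₁
    · exact iff_eq_or_div_two.2 (Or.inr ⟨hab.trans hbc, hA⟩)

theorem div_two_eq {a b : ℕ} (h : pairRel A a b) : b / 2 = a / 2 := by
  rcases iff_eq_or_div_two.1 h with rfl | ⟨hab, -⟩ <;> omega

theorem two_mul_iff {n : ℕ} : pairRel A (2 * n) (2 * n + 1) ↔ A n := by
  rw [iff_eq_or_div_two, show 2 * n / 2 = n by omega, show (2 * n + 1) / 2 = n by omega]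
  simp

theorem rePred (hA : REPred A) : REPred fun p : ℕ × ℕ => pairRel A p.1 p.2 := by
  have half_fst : Primrec fun p : ℕ × ℕ => p.1 / 2 := Primrec.nat_div.comp .fst (.const 2)
  have half_snd : Primrec fun p : ℕ × ℕ => p.2 / 2 := Primrec.nat_div.comp .snd (.const 2)
  refine (REPred.or_of_computablePred ?_ (REPred.and ?_ (hA.comp half_fst.to_comp))).of_eq
    fun p => iff_eq_or_div_two.symm
  · exact (Primrec.eq.comp .fst .snd).computablePred
  · exact (Primrec.eq.comp half_fst half_snd).computablePred.to_re

theorem two_mul_iff_of_reflTransGen {G : ℕ → ℕ → Prop}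
    (hG : ∀ x y, pairRel A x y ↔ Relation.ReflTransGen G x y) (n : ℕ) :
    A n ↔ G (2 * n) (2 * n + 1) := by
  rw [← two_mul_iff (A := A), hG]
  refine ⟨fun h => ?_, Relation.ReflTransGen.single⟩
  refine (h.eq_or_of_forall_eq_or_eq fun z hz => ?_).resolve_left (by omega)
  have := div_two_eq ((hG _ _).2 hz)
  omega

end pairRel

/-- There is a ceer which is not computably graphable: for a c.e. non-computable `A ⊆ ℕ`,
the relation `a E b ⟺ a = b ∨ ∃ n ∈ A, {a,b} = {2n, 2n+1}` is a computably enumerable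
equivalence relation which is not the connectedness relation of any computable graph. -/
theorem stmt14 (A : ℕ → Prop) (hce : CEPred A) (hnc : ¬ ComputablePred A)
    (E : ℕ → ℕ → Prop)
    (hEdef : ∀ a b : ℕ, E a b ↔ (a = b ∨ ∃ n : ℕ, A n ∧
      ((a = 2 * n ∧ b = 2 * n + 1) ∨ (a = 2 * n + 1 ∧ b = 2 * n)))) :
    Equivalence E ∧
    CEPred (fun n => E (Nat.unpair n).1 (Nat.unpair n).2) ∧
    ¬ ∃ G : ℕ → ℕ → Prop,
        ComputablePred (fun n => G (Nat.unpair n).1 (Nat.unpair n).2) ∧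
        Symmetric G ∧ Irreflexive G ∧
        (∀ x y, E x y ↔ Relation.ReflTransGen G x y) := by
  obtain rfl : E = pairRel A := funext₂ fun a b => propext (hEdef a b)
  refine ⟨pairRel.equivalence A, ?_, ?_⟩
  · exact cePred_iff_rePred.2
      ((pairRel.rePred (cePred_iff_rePred.1 hce)).comp Computable.unpair)
  · rintro ⟨G, hG, -, -, hGE⟩
    have hpair : Computable fun n => Nat.pair (2 * n) (2 * n + 1) :=
      (Primrec₂.natPair.comp Primrec.nat_double Primrec.nat_double_succ).to_comp
    refine hnc ((hG.comp hpair).of_eq fun n => ?_)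
    rw [Nat.unpair_pair]
    exact (pairRel.two_mul_iff_of_reflTransGen hGE n).symm
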